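/- arXiv:1102.3907 — 2 statements merged into one kernel-verified Lean document; each statement's English description precedes it below -/
import Mathlib

section
/- For every positive integer k, the function t ↦ sin(2kt) cannot be represented as a naive trigonometric polynomial; equivalently, there do not exist single-variable complex polynomials P and Q such that sin(2kt) = P(cos t) + Q(sin t) for all real t. -/
/-!
The reflections `t ↦ -t` and `t ↦ π - t` fix `cos t` and `sin t` respectively, so any function
`P (cos t) + Q (sin t)`, with `P`, `Q` arbitrary, has zero component odd under both reflections.
But `sin (2 k t)` is odd under both, hence equal to that component, and it is not identically
zero.
-/

open Real

/-- Projection (up to the factor `4`) onto functions odd under both `t ↦ -t` and `t ↦ π - t`. -/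
noncomputable def reflectionAlternatingSum {M : Type*} [AddCommGroup M] (g : ℝ → M) (t : ℝ) : M :=
  g t - g (-t) - g (π - t) + g (π + t)

theorem reflectionAlternatingSum_comp_cos_add_comp_sin {M : Type*} [AddCommGroup M]
    (P Q : ℝ → M) (t : ℝ) :
    reflectionAlternatingSum (fun t => P (cos t) + Q (sin t)) t = 0 := by
  simp only [reflectionAlternatingSum, cos_neg, sin_neg, cos_pi_sub, sin_pi_sub,
    add_comm π t, cos_add_pi, sin_add_pi]
  abel

theorem reflectionAlternatingSum_sin_two_mul_int_mul (k : ℤ) (t : ℝ) :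
    reflectionAlternatingSum (fun t => (sin (2 * k * t) : ℂ)) t = 4 * sin (2 * k * t) := by
  have h_neg : sin (2 * k * -t) = -sin (2 * k * t) := by rw [mul_neg, sin_neg]
  have h_pi_sub : sin (2 * k * (π - t)) = -sin (2 * k * t) := by
    rw [show 2 * k * (π - t) = k * (2 * π) - 2 * k * t by ring, sin_int_mul_two_pi_sub]
  have h_pi_add : sin (2 * k * (π + t)) = sin (2 * k * t) := by
    rw [show 2 * k * (π + t) = 2 * k * t + k * (2 * π) by ring, sin_add_int_mul_two_pi]
  simp only [reflectionAlternatingSum, h_neg, h_pi_sub, h_pi_add]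
  push_cast
  ring

theorem sin_two_mul_int_mul_pi_div_four_mul {k : ℤ} (hk : k ≠ 0) :
    sin (2 * k * (π / (4 * k))) = 1 := by
  have hk' : (k : ℝ) ≠ 0 := Int.cast_ne_zero.mpr hk
  rw [show 2 * k * (π / (4 * k)) = π / 2 by field_simp; ring, sin_pi_div_two]

theorem not_exists_sin_two_mul_int_mul_eq_comp_cos_add_comp_sin {k : ℤ} (hk : k ≠ 0) :
    ¬ ∃ P Q : ℝ → ℂ, ∀ t : ℝ, (sin (2 * k * t) : ℂ) = P (cos t) + Q (sin t) := by
  rintro ⟨P, Q, h⟩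
  have h_fun : (fun t : ℝ => (sin (2 * k * t) : ℂ)) = fun t => P (cos t) + Q (sin t) :=
    funext h
  have h_zero : (4 : ℂ) * sin (2 * k * (π / (4 * k))) = 0 := by
    rw [← reflectionAlternatingSum_sin_two_mul_int_mul, h_fun,
      reflectionAlternatingSum_comp_cos_add_comp_sin]
  rw [sin_two_mul_int_mul_pi_div_four_mul hk] at h_zero
  norm_num at h_zero

/-- For every positive integer `k`, the function `t ↦ sin (2 k t)` cannot be written
as `P (cos t) + Q (sin t)` for single-variable complex polynomials `P`, `Q`. -/
theorem sin_two_k_t_not_naive (k : ℕ) (hk : 0 < k) :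
    ¬ ∃ P Q : Polynomial ℂ, ∀ t : ℝ,
      (Real.sin (2 * k * t) : ℂ)
        = Polynomial.eval (Real.cos t : ℂ) P + Polynomial.eval (Real.sin t : ℂ) Q := by
  rintro ⟨P, Q, h⟩
  refine not_exists_sin_two_mul_int_mul_eq_comp_cos_add_comp_sin (k := k) (by omega)
    ⟨fun x => P.eval (x : ℂ), fun x => Q.eval (x : ℂ), fun t => ?_⟩
  simpa using h t
end

section
/- (Weak form of Bézout's theorem.) Let p(x,y) and q(x,y) be nonzero complex polynomials in two variables of total degrees m and n respectively, and suppose gcd{p,q} = 1 (p and q have no nonconstant common factor in ℂ[x,y]). Then the set of common zeros {(x,y) ∈ ℂ² : p(x,y) = 0 and q(x,y) = 0} is finite, of cardinality at most m·n. -/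
/-!
Let `V d` be the space of polynomials of total degree at most `d`, of dimension
`(d + 1) (d + 2) / 2`, and let `k` common zeros be given. With `N = k + m + n`, the Sylvester
map `(a, b) ↦ p a + q b` from `V (k + n) × V (k + m)` to `V N` has kernel the image of
`c ↦ (q c, -p c)` on `V k`, because `p` and `q` are coprime. Its image consists of polynomials
vanishing at the `k` points, which has codimension `k` in `V N`: products of linear forms
separating the points interpolate arbitrary values. Counting dimensions gives `k ≤ m n`.
-/

namespace MvPolynomial

section Dimension

variable {σ R : Type*} [CommRing R] [Nontrivial R]

theorem setOf_sum_le_eq_biUnion_finsuppAntidiag [Fintype σ] [DecidableEq σ] (d : ℕ) :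
    {n : σ →₀ ℕ | (n.sum fun _ e => e) ≤ d} =
      ↑((Finset.range (d + 1)).biUnion fun j => (Finset.univ : Finset σ).finsuppAntidiag j) := by
  ext n
  simp [Finset.mem_finsuppAntidiag, Finsupp.sum_fintype]

instance [Finite σ] (d : ℕ) : Module.Finite R (restrictTotalDegree σ R d) := by
  classical
  have := Fintype.ofFinite σ
  have : Finite {n : σ →₀ ℕ | (n.sum fun _ e => e) ≤ d} := by
    rw [setOf_sum_le_eq_biUnion_finsuppAntidiag]
    infer_instance
  exact Module.Finite.of_basis (basisRestrictSupport R _)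

theorem finrank_restrictTotalDegree [Fintype σ] (d : ℕ) :
    Module.finrank R (restrictTotalDegree σ R d) =
      ∑ j ∈ Finset.range (d + 1), (Fintype.card σ).multichoose j := by
  classical
  rw [restrictTotalDegree, Module.finrank_eq_nat_card_basis (basisRestrictSupport R _),
    setOf_sum_le_eq_biUnion_finsuppAntidiag, Nat.card_coe_set_eq, Set.ncard_coe_finset,
    Finset.card_biUnion]
  · simp [Finset.card_finsuppAntidiag_nat_eq_multichoose]
  · intro i _ j _ hij
    refine Finset.disjoint_left.mpr fun n hi hj => hij ?_
    rw [Finset.mem_finsuppAntidiag] at hi hj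
    exact hi.1.symm.trans hj.1

theorem two_mul_finrank_restrictTotalDegree_fin_two (d : ℕ) :
    2 * Module.finrank R (restrictTotalDegree (Fin 2) R d) = (d + 1) * (d + 2) := by
  rw [finrank_restrictTotalDegree, Fintype.card_fin]
  induction d with
  | zero => simp
  | succ d ih => rw [Finset.sum_range_succ, mul_add, ih, Nat.multichoose_two]; ring

end Dimension

section LinearMaps

variable {σ K : Type*} [Field K]

noncomputable def mulLeftRestrictTotalDegree (r : MvPolynomial σ K) {e f : ℕ}
    (h : r.totalDegree + e ≤ f) : restrictTotalDegree σ K e →ₗ[K] restrictTotalDegree σ K f :=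
  LinearMap.codRestrict _ (LinearMap.mulLeft K r ∘ₗ Submodule.subtype _) fun a => by
    rw [mem_restrictTotalDegree]
    exact (totalDegree_mul _ _).trans
      (le_trans (by gcongr; exact (mem_restrictTotalDegree _ _ _).mp a.2) h)

noncomputable def sylvesterMap (p q : MvPolynomial σ K) (k : ℕ) :
    restrictTotalDegree σ K (k + q.totalDegree) × restrictTotalDegree σ K (k + p.totalDegree) →ₗ[K]
      restrictTotalDegree σ K (k + p.totalDegree + q.totalDegree) :=
  (mulLeftRestrictTotalDegree p (by omega)).coprod (mulLeftRestrictTotalDegree q (by omega))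

@[simp]
theorem coe_sylvesterMap_apply (p q : MvPolynomial σ K) (k : ℕ)
    (ab : restrictTotalDegree σ K (k + q.totalDegree) ×
      restrictTotalDegree σ K (k + p.totalDegree)) :
    (sylvesterMap p q k ab : MvPolynomial σ K) = p * ab.1 + q * ab.2 :=
  rfl

noncomputable def syzygyMap (p q : MvPolynomial σ K) (k : ℕ) :
    restrictTotalDegree σ K k →ₗ[K]
      restrictTotalDegree σ K (k + q.totalDegree) × restrictTotalDegree σ K (k + p.totalDegree) :=
  (mulLeftRestrictTotalDegree q (by omega)).prod (-mulLeftRestrictTotalDegree p (by omega))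

theorem ker_sylvesterMap_le_range {p q : MvPolynomial σ K} (hpq : IsRelPrime p q) (hq : q ≠ 0)
    (k : ℕ) :
    LinearMap.ker (sylvesterMap p q k) ≤ LinearMap.range (syzygyMap p q k) := by
  rintro ⟨a, b⟩ hab
  have hab' : p * (a : MvPolynomial σ K) + q * b = 0 := congrArg Subtype.val hab
  obtain ⟨c, hc⟩ : q ∣ (a : MvPolynomial σ K) :=
    hpq.symm.dvd_of_dvd_mul_left ⟨-b, by linear_combination hab'⟩
  have hb : (b : MvPolynomial σ K) = -(p * c) := by
    refine mul_left_cancel₀ hq ?_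
    rw [hc] at hab'
    linear_combination hab'
  have hc_deg : c.totalDegree ≤ k := by
    rcases eq_or_ne c 0 with rfl | hc0
    · simp
    · have ha := (mem_restrictTotalDegree _ _ _).mp a.2
      rw [hc, totalDegree_mul_of_isDomain hq hc0] at ha
      omega
  exact ⟨⟨c, (mem_restrictTotalDegree _ _ _).mpr hc_deg⟩,
    Prod.ext (Subtype.ext hc.symm) (Subtype.ext hb.symm)⟩

theorem finrank_ker_sylvesterMap_le [Finite σ] {p q : MvPolynomial σ K} (hpq : IsRelPrime p q)
    (hq : q ≠ 0) (k : ℕ) :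
    Module.finrank K (LinearMap.ker (sylvesterMap p q k)) ≤
      Module.finrank K (restrictTotalDegree σ K k) :=
  (Submodule.finrank_mono (ker_sylvesterMap_le_range hpq hq k)).trans
    (LinearMap.finrank_range_le _)

end LinearMaps

section Interpolation

variable {σ K ι : Type*} [Field K]

theorem exists_totalDegree_le_one_eval_eq_zero_ne_zero {x y : σ → K} (hxy : x ≠ y) :
    ∃ ℓ : MvPolynomial σ K, ℓ.totalDegree ≤ 1 ∧ eval y ℓ = 0 ∧ eval x ℓ ≠ 0 := by
  obtain ⟨s, hs⟩ := Function.ne_iff.mp hxy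
  refine ⟨X s - C (y s), ?_, by simp, by simpa [sub_eq_zero] using hs⟩
  exact (totalDegree_sub_C_le _ _).trans (totalDegree_X s).le

theorem exists_totalDegree_le_eval_eq_zero_iff [Fintype ι] {z : ι → σ → K}
    (hz : Function.Injective z) (i : ι) :
    ∃ v : MvPolynomial σ K, v.totalDegree ≤ Fintype.card ι - 1 ∧
      ∀ j, eval (z j) v = 0 ↔ j ≠ i := by
  classical
  choose ℓ hℓ_deg hℓ_zero hℓ_ne using fun (j : {j // j ≠ i}) =>
    exists_totalDegree_le_one_eval_eq_zero_ne_zero (hz.ne j.2.symm)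
  refine ⟨∏ j, ℓ j, ?_, fun j => ⟨?_, fun hj => ?_⟩⟩
  · calc (∏ j, ℓ j).totalDegree ≤ ∑ j, (ℓ j).totalDegree := totalDegree_finsetProd _ _
      _ ≤ ∑ _j : {j // j ≠ i}, 1 := Finset.sum_le_sum fun j _ => hℓ_deg j
      _ = Fintype.card ι - 1 := by simp [Fintype.card_subtype_compl]
  · rintro h rfl
    rw [map_prod] at h
    exact Finset.prod_ne_zero_iff.mpr (fun j _ => hℓ_ne j) h
  · rw [map_prod]
    exact Finset.prod_eq_zero (Finset.mem_univ ⟨j, hj⟩) (hℓ_zero ⟨j, hj⟩)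

noncomputable def evalRestrictTotalDegree (z : ι → σ → K) (d : ℕ) :
    restrictTotalDegree σ K d →ₗ[K] ι → K :=
  LinearMap.pi fun i => (aeval (z i)).toLinearMap ∘ₗ Submodule.subtype _

@[simp]
theorem evalRestrictTotalDegree_apply (z : ι → σ → K) (d : ℕ) (f : restrictTotalDegree σ K d)
    (i : ι) : evalRestrictTotalDegree z d f i = eval (z i) f := by
  simp [evalRestrictTotalDegree]

theorem evalRestrictTotalDegree_surjective [Fintype ι] {z : ι → σ → K}
    (hz : Function.Injective z) {d : ℕ} (hd : Fintype.card ι ≤ d + 1) :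
    Function.Surjective (evalRestrictTotalDegree z d) := by
  choose v hv_deg hv_eval using exists_totalDegree_le_eval_eq_zero_iff hz
  have hv_mem i : v i ∈ restrictTotalDegree σ K d :=
    (mem_restrictTotalDegree _ _ _).mpr ((hv_deg i).trans (by omega))
  intro w
  refine ⟨∑ i, (w i / eval (z i) (v i)) • ⟨v i, hv_mem i⟩, ?_⟩
  funext j
  rw [map_sum, Finset.sum_apply, Finset.sum_eq_single j]
  · simp [div_mul_cancel₀ _ fun h => (hv_eval j j).mp h rfl]
  · intro i _ hij
    simp [(hv_eval i j).mpr hij.symm]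
  · simp

end Interpolation

open Module in
theorem card_le_totalDegree_mul_of_eval_eq_zero {K : Type*} [Field K]
    {p q : MvPolynomial (Fin 2) K} (hpq : IsRelPrime p q) (hq : q ≠ 0) (s : Finset (Fin 2 → K))
    (hs : ∀ x ∈ s, eval x p = 0 ∧ eval x q = 0) :
    s.card ≤ p.totalDegree * q.totalDegree := by
  set k := s.card
  set m := p.totalDegree
  set n := q.totalDegree
  set E := evalRestrictTotalDegree (Subtype.val : s → Fin 2 → K) (k + m + n)
  have h_range : LinearMap.range (sylvesterMap p q k) ≤ LinearMap.ker E := by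
    rintro _ ⟨ab, rfl⟩
    ext x
    simp [E, (hs x x.2).1, (hs x x.2).2]
  have h_E : finrank K (LinearMap.ker E) + k =
      finrank K (restrictTotalDegree (Fin 2) K (k + m + n)) := by
    rw [← LinearMap.finrank_range_add_finrank_ker E,
      LinearMap.range_eq_top.mpr
        (evalRestrictTotalDegree_surjective Subtype.val_injective (by simp; omega)),
      finrank_top, finrank_fintype_fun_eq_card, Fintype.card_coe, add_comm]
  have h_S := (LinearMap.finrank_range_add_finrank_ker (sylvesterMap p q k)).trans finrank_prod
  have h_mono := Submodule.finrank_mono h_range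
  have h_ker := finrank_ker_sylvesterMap_le hpq hq k
  -- `dim V (k + n) + dim V (k + m) - dim V k - dim V (k + m + n) = -m n`
  have := two_mul_finrank_restrictTotalDegree_fin_two (R := K) k
  have := two_mul_finrank_restrictTotalDegree_fin_two (R := K) (k + m)
  have := two_mul_finrank_restrictTotalDegree_fin_two (R := K) (k + n)
  have := two_mul_finrank_restrictTotalDegree_fin_two (R := K) (k + m + n)
  nlinarith

end MvPolynomial

theorem Set.finite_and_ncard_le_of_forall_finset_card_le {α : Type*} {s : Set α} {N : ℕ}
    (h : ∀ t : Finset α, ↑t ⊆ s → t.card ≤ N) : s.Finite ∧ s.ncard ≤ N := by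
  have hs : s.Finite := by
    by_contra hs
    obtain ⟨t, hts, ht⟩ := Set.Infinite.exists_subset_card_eq hs (N + 1)
    exact absurd (h t hts) (by omega)
  refine ⟨hs, ?_⟩
  rw [Set.ncard_eq_toFinset_card s hs]
  exact h _ (by simp)

theorem bezout_weak_general (p q : MvPolynomial (Fin 2) ℂ) (hq : q ≠ 0)
    (m n : ℕ) (hm : p.totalDegree = m) (hn : q.totalDegree = n)
    (hgcd : ∀ d : MvPolynomial (Fin 2) ℂ, d ∣ p → d ∣ q → IsUnit d) :
    {z : ℂ × ℂ | MvPolynomial.eval ![z.1, z.2] p = 0 ∧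
        MvPolynomial.eval ![z.1, z.2] q = 0}.Finite ∧
      {z : ℂ × ℂ | MvPolynomial.eval ![z.1, z.2] p = 0 ∧
        MvPolynomial.eval ![z.1, z.2] q = 0}.ncard ≤ m * n := by
  subst hm hn
  refine Set.finite_and_ncard_le_of_forall_finset_card_le fun t ht => ?_
  rw [← t.card_map (finTwoArrowEquiv ℂ).symm.toEmbedding]
  refine MvPolynomial.card_le_totalDegree_mul_of_eval_eq_zero hgcd hq _ fun x hx => ?_
  obtain ⟨z, hz, rfl⟩ := Finset.mem_map.mp hx
  exact ht hz

/-- Weak form of Bézout's theorem: if `p`, `q` are nonzero complex polynomials in two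
variables of total degrees `m`, `n` with no nonconstant common factor, then their set
of common zeros in `ℂ²` is finite, of cardinality at most `m * n`. -/
theorem bezout_weak (p q : MvPolynomial (Fin 2) ℂ) (hp : p ≠ 0) (hq : q ≠ 0)
    (m n : ℕ) (hm : p.totalDegree = m) (hn : q.totalDegree = n)
    (hgcd : ∀ d : MvPolynomial (Fin 2) ℂ, d ∣ p → d ∣ q → IsUnit d) :
    {z : ℂ × ℂ | MvPolynomial.eval ![z.1, z.2] p = 0 ∧
        MvPolynomial.eval ![z.1, z.2] q = 0}.Finite ∧
      {z : ℂ × ℂ | MvPolynomial.eval ![z.1, z.2] p = 0 ∧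
        MvPolynomial.eval ![z.1, z.2] q = 0}.ncard ≤ m * n :=
  bezout_weak_general p q hq m n hm hn hgcd
end
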